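/- Under p layers of global depolarizing noise with parameter q interleaved with parametrized unitary layers, the noisy loss satisfies L_noisy(θ) = (1−q)^p L(θ) + (1 − (1−q)^p) Tr(H)/2ⁿ, where L(θ) = Tr(H ρ(θ)) is the noiseless loss. Consequently, θ* is a stationary point (respectively strict saddle point) of L_noisy if and only if it is one of L, provided q < 1. -/

import Mathlib

open Matrix

noncomputable section

variable {n m : ℕ}

/-- The noiseless loss `L(θ) = Tr(H ρ(θ))` (real part of the trace). -/
def noiselessLoss (H : Matrix (Fin (2 ^ n)) (Fin (2 ^ n)) ℂ)
    (ρ : EuclideanSpace ℝ (Fin m) → Matrix (Fin (2 ^ n)) (Fin (2 ^ n)) ℂ)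
    (θ : EuclideanSpace ℝ (Fin m)) : ℝ :=
  ((H * ρ θ).trace).re

/-- The noisy output state under `p` layers of global depolarizing noise with parameter
`q`: `ρ_noisy(θ) = (1−q)^p ρ(θ) + (1 − (1−q)^p) I/2ⁿ`. -/
def noisyState (p : ℕ) (q : ℝ)
    (ρ : EuclideanSpace ℝ (Fin m) → Matrix (Fin (2 ^ n)) (Fin (2 ^ n)) ℂ)
    (θ : EuclideanSpace ℝ (Fin m)) : Matrix (Fin (2 ^ n)) (Fin (2 ^ n)) ℂ :=
  (((1 - q : ℝ) ^ p : ℝ) : ℂ) • ρ θ +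
    (((1 - (1 - q) ^ p : ℝ)) : ℂ) • (((2 : ℂ) ^ n)⁻¹ • (1 : Matrix _ _ ℂ))

/-- The noisy loss `L_noisy(θ) = Tr(H ρ_noisy(θ))`. -/
def noisyLoss (p : ℕ) (q : ℝ) (H : Matrix (Fin (2 ^ n)) (Fin (2 ^ n)) ℂ)
    (ρ : EuclideanSpace ℝ (Fin m) → Matrix (Fin (2 ^ n)) (Fin (2 ^ n)) ℂ)
    (θ : EuclideanSpace ℝ (Fin m)) : ℝ :=
  ((H * noisyState p q ρ θ).trace).re

/-!
Depolarizing noise mixes the output state with the maximally mixed state `I/2ⁿ`, whose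
expectation value `Tr(H)/2ⁿ` does not depend on `θ`. Hence `L_noisy = c L + d` with
`c = (1-q)^p`, which is positive for `q < 1`; gradient and Hessian get multiplied by `c`, so
stationarity and the sign of the Hessian quadratic form are unchanged.
-/

section AffineRescaling

variable {E : Type*}

theorem fderiv_const_mul_field [NormedAddCommGroup E] [NormedSpace ℝ E] (c : ℝ) (f : E → ℝ) :
    fderiv ℝ (fun x => c * f x) = c • fderiv ℝ f :=
  fderiv_const_smul_field c

theorem fderiv_const_mul_add_const [NormedAddCommGroup E] [NormedSpace ℝ E]
    (c d : ℝ) (f : E → ℝ) :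
    fderiv ℝ (fun x => c * f x + d) = c • fderiv ℝ f := by
  funext x
  rw [fderiv_add_const, fderiv_const_mul_field]

variable [NormedAddCommGroup E] [InnerProductSpace ℝ E] [CompleteSpace E]

def IsStrictSaddlePoint (f : E → ℝ) (x : E) : Prop :=
  gradient f x = 0 ∧ ∃ v : E, fderiv ℝ (fun y => fderiv ℝ f y v) x v < 0

theorem gradient_const_mul_add_const (c d : ℝ) (f : E → ℝ) (x : E) :
    gradient (fun y => c * f y + d) x = c • gradient f x := by
  rw [gradient, fderiv_const_mul_add_const, Pi.smul_apply, map_smul, gradient]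

theorem gradient_const_mul_add_const_eq_zero_iff {c : ℝ} (hc : c ≠ 0) (d : ℝ) (f : E → ℝ)
    (x : E) : gradient (fun y => c * f y + d) x = 0 ↔ gradient f x = 0 := by
  rw [gradient_const_mul_add_const, smul_eq_zero, or_iff_right hc]

theorem isStrictSaddlePoint_const_mul_add_const_iff {c : ℝ} (hc : 0 < c) (d : ℝ) (f : E → ℝ)
    (x : E) : IsStrictSaddlePoint (fun y => c * f y + d) x ↔ IsStrictSaddlePoint f x := by
  have hessian (v : E) : fderiv ℝ (fun y => fderiv ℝ (fun z => c * f z + d) y v) x v =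
      c * fderiv ℝ (fun y => fderiv ℝ f y v) x v := by
    simp only [fderiv_const_mul_add_const, Pi.smul_apply, FunLike.coe_smul,
      smul_eq_mul, fderiv_const_mul_field]
  unfold IsStrictSaddlePoint
  simp only [gradient_const_mul_add_const_eq_zero_iff hc.ne', hessian]
  simp only [← smul_eq_mul, smul_neg_iff_of_pos_left hc]

end AffineRescaling

theorem noisyLoss_eq (p : ℕ) (q : ℝ) (H : Matrix (Fin (2 ^ n)) (Fin (2 ^ n)) ℂ)
    (ρ : EuclideanSpace ℝ (Fin m) → Matrix (Fin (2 ^ n)) (Fin (2 ^ n)) ℂ)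
    (θ : EuclideanSpace ℝ (Fin m)) :
    noisyLoss p q H ρ θ =
      (1 - q) ^ p * noiselessLoss H ρ θ + (1 - (1 - q) ^ p) * (H.trace.re / 2 ^ n) := by
  have h2n : ((2 : ℂ) ^ n)⁻¹ = (((2 : ℝ) ^ n)⁻¹ : ℝ) := by push_cast; rfl
  simp only [noisyLoss, noisyState, noiselessLoss, Matrix.mul_add, Matrix.mul_smul,
    Matrix.mul_one, Matrix.trace_add, Matrix.trace_smul, h2n, smul_eq_mul, Complex.add_re,
    Complex.re_ofReal_mul, div_eq_inv_mul]

theorem noisyLoss_affine_and_saddle_iff_general (p : ℕ) (q : ℝ) (hq1 : q < 1)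
    (H : Matrix (Fin (2 ^ n)) (Fin (2 ^ n)) ℂ)
    (ρ : EuclideanSpace ℝ (Fin m) → Matrix (Fin (2 ^ n)) (Fin (2 ^ n)) ℂ) :
    (∀ θ, noisyLoss p q H ρ θ =
        (1 - q) ^ p * noiselessLoss H ρ θ + (1 - (1 - q) ^ p) * (H.trace.re / 2 ^ n)) ∧
    (∀ θs : EuclideanSpace ℝ (Fin m),
        gradient (noisyLoss p q H ρ) θs = 0 ↔ gradient (noiselessLoss H ρ) θs = 0) ∧
    (∀ θs : EuclideanSpace ℝ (Fin m),
        (gradient (noisyLoss p q H ρ) θs = 0 ∧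
          ∃ v : EuclideanSpace ℝ (Fin m),
            fderiv ℝ (fun ϑ => fderiv ℝ (noisyLoss p q H ρ) ϑ v) θs v < 0) ↔
        (gradient (noiselessLoss H ρ) θs = 0 ∧
          ∃ v : EuclideanSpace ℝ (Fin m),
            fderiv ℝ (fun ϑ => fderiv ℝ (noiselessLoss H ρ) ϑ v) θs v < 0)) := by
  have hc : 0 < (1 - q) ^ p := pow_pos (sub_pos.2 hq1) p
  have hL : noisyLoss p q H ρ = fun θ =>
      (1 - q) ^ p * noiselessLoss H ρ θ + (1 - (1 - q) ^ p) * (H.trace.re / 2 ^ n) :=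
    funext (noisyLoss_eq p q H ρ)
  refine ⟨noisyLoss_eq p q H ρ, fun θs => ?_, fun θs => ?_⟩
  · rw [hL]
    exact gradient_const_mul_add_const_eq_zero_iff hc.ne' _ _ θs
  · rw [hL]
    exact isStrictSaddlePoint_const_mul_add_const_iff hc _ _ θs

/-- Under `p` layers of global depolarizing noise with parameter `q`, the noisy loss is
`L_noisy(θ) = (1−q)^p L(θ) + (1 − (1−q)^p) Tr(H)/2ⁿ`; consequently, for `0 ≤ q < 1`,
`θ*` is a stationary point (resp. strict saddle point, i.e. a stationary point where the
Hessian quadratic form takes a negative value) of `L_noisy` iff it is one of `L`. -/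
theorem noisyLoss_affine_and_saddle_iff (p : ℕ) (q : ℝ) (hq0 : 0 ≤ q) (hq1 : q < 1)
    (H : Matrix (Fin (2 ^ n)) (Fin (2 ^ n)) ℂ) (hH : H.IsHermitian)
    (ρ : EuclideanSpace ℝ (Fin m) → Matrix (Fin (2 ^ n)) (Fin (2 ^ n)) ℂ)
    (hρtrace : ∀ θ, (ρ θ).trace = 1) :
    (∀ θ, noisyLoss p q H ρ θ =
        (1 - q) ^ p * noiselessLoss H ρ θ + (1 - (1 - q) ^ p) * (H.trace.re / 2 ^ n)) ∧
    (∀ θs : EuclideanSpace ℝ (Fin m),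
        gradient (noisyLoss p q H ρ) θs = 0 ↔ gradient (noiselessLoss H ρ) θs = 0) ∧
    (∀ θs : EuclideanSpace ℝ (Fin m),
        (gradient (noisyLoss p q H ρ) θs = 0 ∧
          ∃ v : EuclideanSpace ℝ (Fin m),
            fderiv ℝ (fun ϑ => fderiv ℝ (noisyLoss p q H ρ) ϑ v) θs v < 0) ↔
        (gradient (noiselessLoss H ρ) θs = 0 ∧
          ∃ v : EuclideanSpace ℝ (Fin m),
            fderiv ℝ (fun ϑ => fderiv ℝ (noiselessLoss H ρ) ϑ v) θs v < 0)) :=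
  noisyLoss_affine_and_saddle_iff_general p q hq1 H ρ

end
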